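/- Let Q be a finite acyclic quiver, k a field, and V a representation of Q over k. Then the sequence 0 → ⊕_{a∈Q₁} V(ta) ⊗ P_{ha} →^{d^V} ⊕_{x∈Q₀} V(x) ⊗ P_x →^{f^V} V → 0 is exact (vertexwise: at every vertex y the resulting sequence of k-vector spaces is exact), where f^V(v ⊗ p) = V(p)v and d^V(v ⊗ p) = V(a)v ⊗ p − v ⊗ pa for v in the appropriate vertex space and p a path. -/

import Mathlib

open CategoryTheory

/-- The quiver with vertex set `Q₀`, arrow set `Q₁`, tail map `t` and head map `h`. -/
def QuiverOf (Q₀ Q₁ : Type) (t h : Q₁ → Q₀) : Type := Q₀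

instance (Q₀ Q₁ : Type) (t h : Q₁ → Q₀) : Quiver (QuiverOf Q₀ Q₁ t h) :=
  ⟨fun x y => { a : Q₁ // t a = x ∧ h a = y }⟩

instance (Q₀ Q₁ : Type) (t h : Q₁ → Q₀) [DecidableEq Q₀] :
    DecidableEq (QuiverOf Q₀ Q₁ t h) :=
  inferInstanceAs (DecidableEq Q₀)

variable {Q₀ Q₁ : Type} {t h : Q₁ → Q₀}

/-- An element of `Q₀`, seen as a vertex of the quiver. -/
abbrev vtx (Q₀ Q₁ : Type) (t h : Q₁ → Q₀) (x : Q₀) : QuiverOf Q₀ Q₁ t h := x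

/-- A vertex, seen as an object of the path category of the quiver. -/
def toOb (x : QuiverOf Q₀ Q₁ t h) : Paths (QuiverOf Q₀ Q₁ t h) := x

/-- A path, seen as a morphism in the path category of the quiver. -/
def toHom {x y : QuiverOf Q₀ Q₁ t h} (p : Quiver.Path x y) : toOb x ⟶ toOb y := p

/-- The arrow `a : Q₁`, as an arrow `t a ⟶ h a` of the quiver. -/
def arrowOf (Q₀ : Type) (t h : Q₁ → Q₀) (a : Q₁) :
    Quiver.Hom (V := QuiverOf Q₀ Q₁ t h) (t a) (h a) := ⟨a, rfl, rfl⟩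

variable (k : Type) [Field k]

/-- The category of representations of the quiver over `k`. -/
abbrev RepOf (Q₀ Q₁ : Type) (t h : Q₁ → Q₀) : Type _ :=
  Paths (QuiverOf Q₀ Q₁ t h) ⥤ ModuleCat k

/-- The linear map that a representation `V` attaches to the arrow `a`. -/
def arrowMap (V : RepOf k Q₀ Q₁ t h) (a : Q₁) :
    V.obj (toOb (t a)) →ₗ[k] V.obj (toOb (h a)) :=
  (V.map (toHom (Quiver.Hom.toPath (arrowOf Q₀ t h a)))).hom

variable [DecidableEq Q₀] [DecidableEq Q₁]

/-- The vertex space at `y` of `⊕_{x ∈ Q₀} V(x) ⊗ P_x`, where `P_x(y)` is the free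
`k`-vector space on the paths from `x` to `y`. -/
abbrev Std₀ (V : RepOf k Q₀ Q₁ t h) (y : QuiverOf Q₀ Q₁ t h) : Type _ :=
  DirectSum (QuiverOf Q₀ Q₁ t h)
    (fun x => TensorProduct k (V.obj (toOb x)) (Quiver.Path x y →₀ k))

/-- The vertex space at `y` of `⊕_{a ∈ Q₁} V(ta) ⊗ P_{ha}`. -/
abbrev Std₁ (V : RepOf k Q₀ Q₁ t h) (y : QuiverOf Q₀ Q₁ t h) : Type _ :=
  DirectSum Q₁
    (fun a => TensorProduct k (V.obj (toOb (t a)))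
      (Quiver.Path (vtx Q₀ Q₁ t h (h a)) y →₀ k))

/-- The augmentation `f^V : ⊕_{x} V(x) ⊗ P_x → V` at vertex `y`, determined by
`f^V(v ⊗ p) = V(p) v`. -/
noncomputable def fV (V : RepOf k Q₀ Q₁ t h) (y : QuiverOf Q₀ Q₁ t h) :
    Std₀ k V y →ₗ[k] V.obj (toOb y) :=
  DirectSum.toModule k _ _ fun x =>
    TensorProduct.lift
      (((Finsupp.lift (V.obj (toOb x) →ₗ[k] V.obj (toOb y)) k (Quiver.Path x y))
        (fun p => ((V.map (toHom p)).hom : V.obj (toOb x) →ₗ[k] V.obj (toOb y)))).flip)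

/-- The summand of `⊕_{a} V(ta) ⊗ P_{ha}` at the arrow `a`, at vertex `y`. -/
abbrev Std₁Summand (V : RepOf k Q₀ Q₁ t h) (a : Q₁) (y : QuiverOf Q₀ Q₁ t h) : Type _ :=
  TensorProduct k (V.obj (toOb (t a))) (Quiver.Path (vtx Q₀ Q₁ t h (h a)) y →₀ k)

/-- First part of the differential: `v ⊗ p ↦ (V(a) v) ⊗ p`, landing in the summand of
`⊕_{x} V(x) ⊗ P_x` at `x = ha`. -/
noncomputable def dV₁ (V : RepOf k Q₀ Q₁ t h) (a : Q₁) (y : QuiverOf Q₀ Q₁ t h) :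
    Std₁Summand k V a y →ₗ[k] Std₀ k V y :=
  DirectSum.lof k (QuiverOf Q₀ Q₁ t h)
      (fun x => TensorProduct k (V.obj (toOb x)) (Quiver.Path x y →₀ k))
      (vtx Q₀ Q₁ t h (h a)) ∘ₗ
    TensorProduct.map (arrowMap k V a) LinearMap.id

/-- Second part of the differential: `v ⊗ p ↦ v ⊗ (pa)`, landing in the summand of
`⊕_{x} V(x) ⊗ P_x` at `x = ta`. -/
noncomputable def dV₂ (V : RepOf k Q₀ Q₁ t h) (a : Q₁) (y : QuiverOf Q₀ Q₁ t h) :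
    Std₁Summand k V a y →ₗ[k] Std₀ k V y :=
  DirectSum.lof k (QuiverOf Q₀ Q₁ t h)
      (fun x => TensorProduct k (V.obj (toOb x)) (Quiver.Path x y →₀ k))
      (vtx Q₀ Q₁ t h (t a)) ∘ₗ
    TensorProduct.map LinearMap.id
      (Finsupp.lmapDomain k k
        (fun p : Quiver.Path (vtx Q₀ Q₁ t h (h a)) y =>
          (Quiver.Hom.toPath (arrowOf Q₀ t h a)).comp p))

/-- The differential `d^V : ⊕_{a} V(ta) ⊗ P_{ha} → ⊕_{x} V(x) ⊗ P_x` at vertex `y`,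
determined by `d^V(v ⊗ p) = (V(a) v) ⊗ p − v ⊗ (pa)`. -/
noncomputable def dV (V : RepOf k Q₀ Q₁ t h) (y : QuiverOf Q₀ Q₁ t h) :
    Std₁ k V y →ₗ[k] Std₀ k V y :=
  DirectSum.toModule k _ _ fun a => dV₁ k V a y + (-1 : k) • dV₂ k V a y

/-!
The augmentation `f^V` is split by `v ↦ v ⊗ e_y`, and `f^V ∘ d^V = 0` by functoriality of `V`.
Modulo the image of `d^V` we have `v ⊗ pa ≡ V(a)v ⊗ p`, so by induction on the length of paths
every element is congruent to some `w ⊗ e_y`; hence `ker f^V = im d^V`. For injectivity, let `r`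
remove the first arrow of every nontrivial path, so that `r(v ⊗ pa) = v ⊗ p`. Then `r ∘ d^V + id`
strictly lowers the lengths of the paths occurring in an element, so it has no nonzero fixed
point, while it fixes every element of `ker d^V`.
-/

open TensorProduct

namespace DirectSum

variable {R ι : Type*} [CommSemiring R] [DecidableEq ι] (M : ι → Type*)
  [∀ i, AddCommMonoid (M i)] [∀ i, Module R (M i)] {P : ι → Type*}

noncomputable def tensorFinsuppLift {W : Type*} [AddCommMonoid W] [Module R W]
    (G : ∀ i, P i → M i →ₗ[R] W) : (⨁ i, M i ⊗[R] (P i →₀ R)) →ₗ[R] W :=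
  toModule R ι W fun i => lift (Finsupp.lift (M i →ₗ[R] W) R (P i) (G i)).flip

variable {M}

theorem tensorFinsuppLift_lof_tmul_single {W : Type*} [AddCommMonoid W] [Module R W]
    (G : ∀ i, P i → M i →ₗ[R] W) (i : ι) (m : M i) (p : P i) (c : R) :
    tensorFinsuppLift M G (lof R ι (fun i => M i ⊗[R] (P i →₀ R)) i (m ⊗ₜ Finsupp.single p c)) =
      c • G i p m := by
  simp [tensorFinsuppLift]

theorem lof_tmul_single_eq_smul (i : ι) (m : M i) (p : P i) (c : R) :
    lof R ι (fun i => M i ⊗[R] (P i →₀ R)) i (m ⊗ₜ Finsupp.single p c) =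
      c • lof R ι (fun i => M i ⊗[R] (P i →₀ R)) i (m ⊗ₜ Finsupp.single p 1) := by
  rw [← Finsupp.smul_single_one, tmul_smul, map_smul]

variable (R M) in
noncomputable def weightFiltration (w : ∀ i, P i → ℕ) (n : ℕ) :
    Submodule R (⨁ i, M i ⊗[R] (P i →₀ R)) :=
  Submodule.span R {ξ | ∃ (i : ι) (m : M i) (p : P i), w i p < n ∧
    lof R ι (fun i => M i ⊗[R] (P i →₀ R)) i (m ⊗ₜ Finsupp.single p 1) = ξ}

variable {w : ∀ i, P i → ℕ}

theorem lof_tmul_single_mem_weightFiltration {n : ℕ} {i : ι} (m : M i) {p : P i}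
    (hp : w i p < n) (c : R) :
    lof R ι (fun i => M i ⊗[R] (P i →₀ R)) i (m ⊗ₜ Finsupp.single p c) ∈
      weightFiltration R M w n := by
  rw [lof_tmul_single_eq_smul]
  exact Submodule.smul_mem _ _ (Submodule.subset_span ⟨i, m, p, hp, rfl⟩)

theorem weightFiltration_zero : weightFiltration R M w 0 = ⊥ := by
  simp [weightFiltration]

theorem weightFiltration_mono : Monotone (weightFiltration R M w) :=
  fun _ _ hmn => Submodule.span_mono fun _ ⟨i, m, p, hp, hξ⟩ => ⟨i, m, p, hp.trans_le hmn, hξ⟩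

theorem span_lof_tmul_single_eq_top :
    Submodule.span R {ξ | ∃ (i : ι) (m : M i) (p : P i),
      lof R ι (fun i => M i ⊗[R] (P i →₀ R)) i (m ⊗ₜ Finsupp.single p 1) = ξ} = ⊤ := by
  rw [eq_top_iff]
  rintro ξ -
  induction ξ using DirectSum.induction_on with
  | zero => exact zero_mem _
  | add ξ₁ ξ₂ h₁ h₂ => exact add_mem h₁ h₂
  | of i x =>
    rw [← lof_eq_of R]
    induction x using TensorProduct.induction_on with
    | zero => simp
    | add x₁ x₂ h₁ h₂ => rw [map_add]; exact add_mem h₁ h₂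
    | tmul m f =>
      induction f using Finsupp.induction_linear with
      | zero => simp
      | add f₁ f₂ h₁ h₂ => rw [tmul_add, map_add]; exact add_mem h₁ h₂
      | single p c =>
        rw [lof_tmul_single_eq_smul]
        exact Submodule.smul_mem _ _ (Submodule.subset_span ⟨i, m, p, rfl⟩)

theorem tensorFinsupp_hom_ext {W : Type*} [AddCommMonoid W] [Module R W]
    {f g : (⨁ i, M i ⊗[R] (P i →₀ R)) →ₗ[R] W}
    (H : ∀ i (m : M i) (p : P i),
      f (lof R ι (fun i => M i ⊗[R] (P i →₀ R)) i (m ⊗ₜ Finsupp.single p 1)) =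
        g (lof R ι (fun i => M i ⊗[R] (P i →₀ R)) i (m ⊗ₜ Finsupp.single p 1))) :
    f = g :=
  LinearMap.ext_on span_lof_tmul_single_eq_top (by rintro _ ⟨i, m, p, rfl⟩; exact H i m p)

theorem exists_mem_weightFiltration (ξ : ⨁ i, M i ⊗[R] (P i →₀ R)) :
    ∃ n, ξ ∈ weightFiltration R M w n := by
  have hξ := span_lof_tmul_single_eq_top (R := R) (M := M) (P := P) ▸ Submodule.mem_top (x := ξ)
  induction hξ using Submodule.span_induction with
  | mem _ hξ =>
    obtain ⟨i, m, p, rfl⟩ := hξ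
    exact ⟨w i p + 1, lof_tmul_single_mem_weightFiltration m (Nat.lt_succ_self _) 1⟩
  | zero => exact ⟨0, zero_mem _⟩
  | add _ _ _ _ h₁ h₂ =>
    obtain ⟨n₁, h₁⟩ := h₁
    obtain ⟨n₂, h₂⟩ := h₂
    exact ⟨max n₁ n₂, add_mem (weightFiltration_mono (le_max_left _ _) h₁)
      (weightFiltration_mono (le_max_right _ _) h₂)⟩
  | smul c _ _ h => exact h.imp fun _ hn => Submodule.smul_mem _ c hn

end DirectSum

theorem LinearMap.eq_zero_of_apply_eq_self_of_le_comap {R M : Type*} [Semiring R]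
    [AddCommMonoid M] [Module R M] {F : ℕ → Submodule R M} {N : M →ₗ[R] M}
    (h0 : F 0 = ⊥) (hN : ∀ n, F (n + 1) ≤ (F n).comap N) {n : ℕ} {ξ : M} (hξ : ξ ∈ F n)
    (hfix : N ξ = ξ) : ξ = 0 := by
  induction n with
  | zero => simpa [h0] using hξ
  | succ n ih => exact ih (hfix ▸ hN n hξ)

theorem LinearMap.range_eq_ker_of_sup_range_eq_top {R L M N : Type*} [Semiring R]
    [AddCommMonoid L] [AddCommMonoid M] [AddCommMonoid N] [Module R L] [Module R M]
    [Module R N] {d : L →ₗ[R] M} {f : M →ₗ[R] N} {s : N →ₗ[R] M} (hfd : f ∘ₗ d = 0)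
    (hfs : f ∘ₗ s = LinearMap.id) (hsup : LinearMap.range d ⊔ LinearMap.range s = ⊤) :
    LinearMap.range d = LinearMap.ker f := by
  refine le_antisymm (LinearMap.range_le_ker_iff.mpr hfd) fun ω hω => ?_
  obtain ⟨_, ⟨ξ, rfl⟩, _, ⟨v, rfl⟩, rfl⟩ :=
    Submodule.mem_sup.mp (hsup ▸ Submodule.mem_top : ω ∈ _)
  have hv : v = 0 := by
    simpa [← LinearMap.comp_apply, hfd, hfs] using LinearMap.mem_ker.mp hω
  simp [hv]

namespace Quiver.Path

variable {V : Type*} [Quiver V] {x y : V}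

theorem toPath_comp_injective :
    Function.Injective fun s : Σ c, (x ⟶ c) × Path c y => s.2.1.toPath.comp s.2.2 := by
  rintro ⟨c, e, q⟩ ⟨c', e', q'⟩ (H : e.toPath.comp q = e'.toPath.comp q')
  obtain rfl : c = c' := by
    simpa using congrArg (fun p : Path x y => p.vertices.tail.head?) H
  obtain ⟨he, rfl⟩ := (comp_inj' (p₁ := e.toPath) (p₂ := e'.toPath) rfl).1 H
  rw [eq_of_heq (hom_heq_of_cons_eq_cons he)]

theorem exists_toPath_comp_eq {p : Path x y} (hp : p.length ≠ 0) :
    ∃ s : Σ c, (x ⟶ c) × Path c y, s.2.1.toPath.comp s.2.2 = p := by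
  obtain ⟨c, e, q, rfl, -⟩ := (length_ne_zero_iff_eq_comp p).1 hp
  exact ⟨⟨c, e, q⟩, rfl⟩

theorem length_toPath_comp {c : V} (e : x ⟶ c) (q : Path c y) :
    (e.toPath.comp q).length = q.length + 1 := by
  rw [length_comp, length_toPath, Nat.add_comm]

noncomputable def headSplit (p : Path x y) (hp : p.length ≠ 0) : Σ c, (x ⟶ c) × Path c y :=
  (exists_toPath_comp_eq hp).choose

theorem headSplit_spec (p : Path x y) (hp : p.length ≠ 0) :
    (p.headSplit hp).2.1.toPath.comp (p.headSplit hp).2.2 = p :=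
  (exists_toPath_comp_eq hp).choose_spec

theorem headSplit_toPath_comp {c : V} (e : x ⟶ c) (q : Path c y) :
    (e.toPath.comp q).headSplit (by simp) = ⟨c, e, q⟩ :=
  toPath_comp_injective (headSplit_spec _ _)

theorem length_headSplit_lt (p : Path x y) (hp : p.length ≠ 0) :
    (p.headSplit hp).2.2.length < p.length := by
  conv_rhs => rw [← headSplit_spec p hp]
  simp

end Quiver.Path

namespace StandardResolution

open CategoryTheory DirectSum Quiver

variable {Q₀ Q₁ : Type} {t h : Q₁ → Q₀} (k : Type) [Field k] (V : RepOf k Q₀ Q₁ t h)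
  (y : QuiverOf Q₀ Q₁ t h)

theorem map_nil : (V.map (toHom (Path.nil : Path y y))).hom = LinearMap.id :=
  congrArg ModuleCat.Hom.hom (V.map_id (toOb y))

theorem map_toPath_comp (a : Q₁) (p : Path (vtx Q₀ Q₁ t h (h a)) y) :
    (V.map (toHom ((arrowOf Q₀ t h a).toPath.comp p))).hom =
      (V.map (toHom p)).hom ∘ₗ arrowMap k V a :=
  congrArg ModuleCat.Hom.hom (V.map_comp (toHom (arrowOf Q₀ t h a).toPath) (toHom p))

variable [DecidableEq Q₀]

noncomputable def augmentationSection : V.obj (toOb y) →ₗ[k] Std₀ k V y :=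
  lof k _ _ y ∘ₗ (TensorProduct.mk k _ _).flip (Finsupp.single Path.nil 1)

variable {k V y}

theorem fV_lof_tmul_single {x : QuiverOf Q₀ Q₁ t h} (v : V.obj (toOb x)) (p : Path x y) (c : k) :
    fV k V y (lof k _ _ x (v ⊗ₜ Finsupp.single p c)) = c • (V.map (toHom p)).hom v := by
  have hfV : fV k V y = tensorFinsuppLift _ fun x (p : Path x y) => (V.map (toHom p)).hom := rfl
  rw [hfV, tensorFinsuppLift_lof_tmul_single]

theorem fV_comp_augmentationSection :
    fV k V y ∘ₗ augmentationSection k V y = LinearMap.id := by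
  ext v
  simp [augmentationSection, fV_lof_tmul_single, map_nil]

variable [DecidableEq Q₁]

theorem dV_lof_tmul_single (a : Q₁) (v : V.obj (toOb (t a)))
    (p : Path (vtx Q₀ Q₁ t h (h a)) y) (c : k) :
    dV k V y (lof k _ _ a (v ⊗ₜ Finsupp.single p c)) =
      lof k _ _ (vtx Q₀ Q₁ t h (h a)) (arrowMap k V a v ⊗ₜ Finsupp.single p c) -
        lof k _ _ (vtx Q₀ Q₁ t h (t a))
          (v ⊗ₜ Finsupp.single ((arrowOf Q₀ t h a).toPath.comp p) c) := by
  simp [dV, dV₁, dV₂, sub_eq_add_neg]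

theorem fV_comp_dV : fV k V y ∘ₗ dV k V y = 0 := by
  refine tensorFinsupp_hom_ext fun a v p => ?_
  simp [dV_lof_tmul_single, fV_lof_tmul_single, map_toPath_comp]

theorem lof_tmul_single_mem_sup_range (n : ℕ) {x : QuiverOf Q₀ Q₁ t h} (p : Path x y)
    (hp : p.length < n) (v : V.obj (toOb x)) :
    lof k _ _ x (v ⊗ₜ Finsupp.single p 1) ∈
      LinearMap.range (dV k V y) ⊔ LinearMap.range (augmentationSection k V y) := by
  induction n generalizing x with
  | zero => omega
  | succ n ih =>
    by_cases hp0 : p.length = 0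
    · obtain rfl := p.eq_of_length_zero hp0
      obtain rfl := p.eq_nil_of_length_zero hp0
      exact Submodule.mem_sup_right ⟨v, rfl⟩
    · obtain ⟨⟨c, e, q⟩, rfl⟩ := Path.exists_toPath_comp_eq hp0
      have hq : q.length < n := by
        simp only [Path.length_toPath_comp] at hp; omega
      obtain ⟨a, rfl, rfl⟩ := e
      -- `v ⊗ qa = V(a)v ⊗ q - d(v ⊗ q)`
      convert sub_mem (ih q hq (arrowMap k V a v))
        (Submodule.mem_sup_left ⟨lof k _ _ a (v ⊗ₜ Finsupp.single q 1), rfl⟩) using 1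
      rw [dV_lof_tmul_single, sub_sub_cancel]
      rfl

theorem sup_range_dV_augmentationSection :
    LinearMap.range (dV k V y) ⊔ LinearMap.range (augmentationSection k V y) = ⊤ := by
  rw [eq_top_iff, ← span_lof_tmul_single_eq_top, Submodule.span_le]
  rintro _ ⟨x, v, p, rfl⟩
  exact lof_tmul_single_mem_sup_range _ p (Nat.lt_succ_self _) v

variable (k V y) in
noncomputable def tensorTail :
    ∀ {x : QuiverOf Q₀ Q₁ t h}, (Σ c, (x ⟶ c) × Path c y) → V.obj (toOb x) →ₗ[k] Std₁ k V y
  | _, ⟨_, ⟨a, rfl, rfl⟩, q⟩ => lof k _ _ a ∘ₗ (TensorProduct.mk k _ _).flip (Finsupp.single q 1)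

variable (k V y) in
noncomputable def dropFirstArrow : Std₀ k V y →ₗ[k] Std₁ k V y :=
  tensorFinsuppLift _ fun _ p => if hp : p.length = 0 then 0 else tensorTail k V y (p.headSplit hp)

variable (k V y) in
noncomputable abbrev lengthFiltration (n : ℕ) : Submodule k (Std₁ k V y) :=
  weightFiltration k (fun a => V.obj (toOb (t a)))
    (fun a (q : Path (vtx Q₀ Q₁ t h (h a)) y) => q.length) n

theorem dropFirstArrow_lof_toPath_comp (a : Q₁) (v : V.obj (toOb (t a)))
    (q : Path (vtx Q₀ Q₁ t h (h a)) y) (c : k) :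
    dropFirstArrow k V y (lof k _ _ (vtx Q₀ Q₁ t h (t a))
        (v ⊗ₜ Finsupp.single ((arrowOf Q₀ t h a).toPath.comp q) c)) =
      lof k _ _ a (v ⊗ₜ Finsupp.single q c) := by
  rw [dropFirstArrow, tensorFinsuppLift_lof_tmul_single]
  erw [dif_neg ((Path.length_toPath_comp _ _).trans_ne (Nat.succ_ne_zero _)),
    Path.headSplit_toPath_comp]
  rw [lof_tmul_single_eq_smul]
  simp only [arrowOf, tensorTail]
  rfl

theorem dropFirstArrow_lof_mem_lengthFiltration {x : QuiverOf Q₀ Q₁ t h} (v : V.obj (toOb x))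
    (p : Path x y) :
    dropFirstArrow k V y (lof k _ _ x (v ⊗ₜ Finsupp.single p 1)) ∈
      lengthFiltration k V y p.length := by
  rw [dropFirstArrow, tensorFinsuppLift_lof_tmul_single, one_smul]
  split_ifs with hp
  · exact zero_mem _
  · have hlt := p.length_headSplit_lt hp
    generalize p.headSplit hp = s at hlt ⊢
    obtain ⟨c, ⟨a, rfl, rfl⟩, q⟩ := s
    exact Submodule.subset_span ⟨a, v, q, hlt, rfl⟩

theorem dV_injective : Function.Injective (dV k V y) := by
  set N := dropFirstArrow k V y ∘ₗ dV k V y + LinearMap.id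
  have hN (n : ℕ) : lengthFiltration k V y (n + 1) ≤ (lengthFiltration k V y n).comap N := by
    refine Submodule.span_le.mpr ?_
    rintro _ ⟨a, v, q, hq, rfl⟩
    simp only [SetLike.mem_coe, Submodule.mem_comap, N, LinearMap.add_apply,
      LinearMap.comp_apply, LinearMap.id_apply, dV_lof_tmul_single, map_sub,
      dropFirstArrow_lof_toPath_comp, sub_add_cancel]
    exact weightFiltration_mono (Nat.lt_succ_iff.mp hq)
      (dropFirstArrow_lof_mem_lengthFiltration _ q)
  rw [← LinearMap.ker_eq_bot, eq_bot_iff]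
  intro ξ hξ
  obtain ⟨n, hn⟩ : ∃ n, ξ ∈ lengthFiltration k V y n := exists_mem_weightFiltration ξ
  exact LinearMap.eq_zero_of_apply_eq_self_of_le_comap weightFiltration_zero hN hn
    (by simp [N, LinearMap.mem_ker.mp hξ])

end StandardResolution

open StandardResolution in
theorem standard_projective_resolution_exact
    (V : RepOf k Q₀ Q₁ t h)
    (y : QuiverOf Q₀ Q₁ t h) :
    Function.Injective (dV k V y) ∧
      LinearMap.range (dV k V y) = LinearMap.ker (fV k V y) ∧
      Function.Surjective (fV k V y) :=
  ⟨dV_injective,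
    LinearMap.range_eq_ker_of_sup_range_eq_top fV_comp_dV fV_comp_augmentationSection
      sup_range_dV_augmentationSection,
    LinearMap.surjective_of_comp_eq_id _ _ fV_comp_augmentationSection⟩
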